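/- Stein-type L² estimate: let T_n be self-adjoint positivity-preserving operators on L²(ℝ) with T_n T_m ≤ 2 T_{m+1} (as positivity-preserving kernels) for n ≤ m. Then for finitely many nonnegative g_n ∈ L²(ℝ) and any bijection α of the indices, ‖Σ_n T_n g_{α(n)}‖₂² ≤ 4 ‖Σ_n g_n‖₂ · sup_β ‖Σ_m T_m g_{β(m)}‖₂, and consequently sup_α ‖Σ_n T_n g_{α(n)}‖₂ ≤ 4 ‖Σ_n g_n‖₂. -/

import Mathlib

open MeasureTheory
open scoped ENNReal

/-- The dyadic averaging operator `(T n f) x = 2^{-(n+1)} ∫_{x-2^n}^{x+2^n} f(t) dt`. -/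
noncomputable def T (n : ℤ) (f : ℝ → ℝ) (x : ℝ) : ℝ :=
  (2 : ℝ) ^ (-(n + 1)) * ∫ t in (x - (2 : ℝ) ^ n)..(x + (2 : ℝ) ^ n), f t

noncomputable def lT (n : ℤ) (f : ℝ → ℝ≥0∞) (x : ℝ) : ℝ≥0∞ :=
  ENNReal.ofReal ((2:ℝ) ^ (-(n+1))) *
    ∫⁻ t in Set.Ioo (x - (2:ℝ)^n) (x + (2:ℝ)^n), f t

/-- the kernel -/
noncomputable def Kk (n : ℤ) (x t : ℝ) : ℝ≥0∞ :=
  (Set.Ioo (x - (2:ℝ)^n) (x + (2:ℝ)^n)).indicator (1 : ℝ → ℝ≥0∞) t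

lemma Kk_symm (n : ℤ) (x t : ℝ) : Kk n x t = Kk n t x := by
  simp only [Kk, Set.indicator, Set.mem_Ioo]
  have : (x - (2:ℝ)^n < t ∧ t < x + (2:ℝ)^n) ↔ (t - (2:ℝ)^n < x ∧ x < t + (2:ℝ)^n) := by
    constructor <;> rintro ⟨h1, h2⟩ <;> constructor <;> linarith
  simp [this]

lemma measurable_Kk (n : ℤ) : Measurable (fun p : ℝ × ℝ => Kk n p.1 p.2) := by
  have : (fun p : ℝ × ℝ => Kk n p.1 p.2)
      = ({q : ℝ × ℝ | q.1 - (2:ℝ)^n < q.2 ∧ q.2 < q.1 + (2:ℝ)^n}).indicator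
          (fun _ => 1) := by
    ext p
    simp only [Kk, Set.indicator, Set.mem_Ioo, Set.mem_setOf_eq, Pi.one_apply]
  rw [this]
  exact measurable_const.indicator
    ((measurableSet_lt (measurable_fst.sub measurable_const) measurable_snd).inter
      (measurableSet_lt measurable_snd (measurable_fst.add measurable_const)))

lemma lT_eq_kernel (n : ℤ) (u : ℝ → ℝ≥0∞) (x : ℝ) :
    lT n u x = ENNReal.ofReal ((2:ℝ) ^ (-(n+1))) * ∫⁻ t, Kk n x t * u t := by
  rw [lT, ← lintegral_indicator measurableSet_Ioo]
  congr 1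
  apply lintegral_congr fun t => ?_
  simp only [Kk, Set.indicator, Set.mem_Ioo]
  by_cases ht : x - (2:ℝ)^n < t ∧ t < x + (2:ℝ)^n <;> simp [ht]

lemma coeff_mul_len (n : ℤ) :
    ENNReal.ofReal ((2:ℝ) ^ (-(n+1))) * ENNReal.ofReal ((2:ℝ)^n * 2) = 1 := by
  rw [← ENNReal.ofReal_mul (by positivity)]
  have : (2:ℝ) ^ (-(n+1)) * ((2:ℝ)^n * 2) = 1 := by
    rw [zpow_neg, ← zpow_add_one₀ (by norm_num : (2:ℝ) ≠ 0)]
    exact inv_mul_cancel₀ (by positivity)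
  rw [this, ENNReal.ofReal_one]

lemma lT_const (n : ℤ) (C : ℝ≥0∞) (x : ℝ) : lT n (fun _ => C) x = C := by
  rw [lT, setLIntegral_const, Real.volume_Ioo]
  have : x + (2:ℝ)^n - (x - (2:ℝ)^n) = (2:ℝ)^n * 2 := by ring
  rw [this, mul_comm C, ← mul_assoc, coeff_mul_len, one_mul]

lemma lT_mono {f h : ℝ → ℝ≥0∞} (hfh : ∀ t, f t ≤ h t) (n : ℤ) (x : ℝ) :
    lT n f x ≤ lT n h x :=
  mul_le_mul_right (lintegral_mono fun t => hfh t) _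

lemma measurable_lT {f : ℝ → ℝ≥0∞} (hf : Measurable f) (n : ℤ) : Measurable (lT n f) := by
  have : lT n f = fun x => ENNReal.ofReal ((2:ℝ) ^ (-(n+1))) * ∫⁻ t, Kk n x t * f t :=
    funext (lT_eq_kernel n f)
  rw [this]
  apply Measurable.const_mul
  exact Measurable.lintegral_prod_right' ((measurable_Kk n).mul (hf.comp measurable_snd))

lemma lT_selfadj {f h : ℝ → ℝ≥0∞} (hf : Measurable f) (hh : Measurable h) (n : ℤ) :
    ∫⁻ x, lT n f x * h x = ∫⁻ x, f x * lT n h x := by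
  simp_rw [lT_eq_kernel n]
  set c := ENNReal.ofReal ((2:ℝ) ^ (-(n+1))) with hc_def
  have hc : c ≠ ⊤ := ENNReal.ofReal_ne_top
  calc ∫⁻ x, (c * ∫⁻ t, Kk n x t * f t) * h x
      = c * ∫⁻ x, ∫⁻ t, Kk n x t * f t * h x := by
        rw [← lintegral_const_mul' _ _ hc]
        apply lintegral_congr fun x => ?_
        rw [mul_assoc]
        congr 1
        exact (lintegral_mul_const _ (((measurable_Kk n).comp
          (measurable_const.prodMk measurable_id)).mul hf)).symm
    _ = c * ∫⁻ t, ∫⁻ x, Kk n x t * f t * h x := by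
        congr 1
        apply lintegral_lintegral_swap
        exact (((measurable_Kk n).mul (hf.comp measurable_snd)).mul
          (hh.comp measurable_fst)).aemeasurable
    _ = ∫⁻ t, f t * (c * ∫⁻ x, Kk n t x * h x) := by
        rw [← lintegral_const_mul' _ _ hc]
        apply lintegral_congr fun t => ?_
        rw [mul_left_comm (f t) c]
        congr 1
        have hm : Measurable fun x : ℝ => Kk n t x * h x :=
          ((measurable_Kk n).comp (measurable_const.prodMk measurable_id)).mul hh
        rw [← lintegral_const_mul (f t) hm]
        apply lintegral_congr fun x => ?_
        rw [Kk_symm n x t]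
        ring

lemma lT_comp {n m : ℤ} (hnm : n ≤ m) (f : ℝ → ℝ≥0∞) (x : ℝ) :
    lT n (lT m f) x ≤ 2 * lT (m+1) f x := by
  have h2nm : (2:ℝ)^n ≤ (2:ℝ)^m := zpow_le_zpow_right₀ one_le_two hnm
  have hpt : ∀ t ∈ Set.Ioo (x - (2:ℝ)^n) (x + (2:ℝ)^n), lT m f t ≤ 2 * lT (m+1) f x := by
    intro t ht
    simp only [Set.mem_Ioo] at ht
    have hsub : Set.Ioo (t - (2:ℝ)^m) (t + (2:ℝ)^m)
        ⊆ Set.Ioo (x - (2:ℝ)^(m+1)) (x + (2:ℝ)^(m+1)) := by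
      have h21 : (2:ℝ)^(m+1) = (2:ℝ)^m * 2 := by
        rw [zpow_add_one₀ (by norm_num : (2:ℝ) ≠ 0)]
      intro s hs
      simp only [Set.mem_Ioo] at hs ⊢
      constructor <;> [nlinarith [hs.1, ht.1]; nlinarith [hs.2, ht.2]]
    have hcoef : ENNReal.ofReal ((2:ℝ) ^ (-(m+1)))
        = 2 * ENNReal.ofReal ((2:ℝ) ^ (-(m+1+1))) := by
      rw [← ENNReal.ofReal_ofNat, ← ENNReal.ofReal_mul (by norm_num)]
      have h1 : -(m+1) = 1 + -(m+1+1) := by ring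
      rw [h1, zpow_add₀ (by norm_num : (2:ℝ) ≠ 0), zpow_one]
    calc lT m f t ≤ ENNReal.ofReal ((2:ℝ) ^ (-(m+1))) *
          ∫⁻ s in Set.Ioo (x - (2:ℝ)^(m+1)) (x + (2:ℝ)^(m+1)), f s :=
        mul_le_mul_right (lintegral_mono_set hsub) _
      _ = 2 * lT (m+1) f x := by rw [hcoef, lT, mul_assoc]
  calc lT n (lT m f) x ≤ lT n (fun _ => 2 * lT (m+1) f x) x := by
        rw [lT, lT]
        exact mul_le_mul_right (setLIntegral_mono measurable_const hpt) _
    _ = 2 * lT (m+1) f x := lT_const _ _ _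

lemma sq_lT_le_lT_sq {f : ℝ → ℝ≥0∞} (hf : Measurable f) (n : ℤ) (x : ℝ) :
    lT n f x ^ 2 ≤ lT n (fun t => f t ^ 2) x := by
  set c := ENNReal.ofReal ((2:ℝ) ^ (-(n+1))) with hc_def
  set I := Set.Ioo (x - (2:ℝ)^n) (x + (2:ℝ)^n) with hI_def
  have hconj : Real.HolderConjugate 2 2 := Real.HolderConjugate.two_two
  have hholder := ENNReal.lintegral_mul_le_Lp_mul_Lq (volume.restrict I) hconj
    hf.aemeasurable (aemeasurable_const (b := (1:ℝ≥0∞)))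
  simp only [Pi.mul_apply, mul_one, ENNReal.one_rpow, lintegral_const, one_mul,
    ENNReal.rpow_two, one_pow] at hholder
  -- hholder : ∫⁻ in I, f ≤ (∫⁻ in I, f^2)^(1/2) * ((volume.restrict I) univ)^(1/2)
  have hvol : (volume.restrict I) Set.univ = ENNReal.ofReal ((2:ℝ)^n * 2) := by
    rw [Measure.restrict_apply_univ, hI_def, Real.volume_Ioo]
    congr 1
    ring
  have hJ : (∫⁻ t in I, f t) ^ 2 ≤ (∫⁻ t in I, f t ^ 2) * ENNReal.ofReal ((2:ℝ)^n * 2) := by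
    calc (∫⁻ t in I, f t) ^ 2
        ≤ ((∫⁻ t in I, f t ^ 2) ^ (1/2:ℝ) * ((volume.restrict I) Set.univ) ^ (1/2:ℝ)) ^ 2 :=
          pow_le_pow_left' hholder 2
      _ = (∫⁻ t in I, f t ^ 2) * ENNReal.ofReal ((2:ℝ)^n * 2) := by
          rw [mul_pow, ← ENNReal.rpow_natCast (_ ^ (1/2:ℝ)) 2,
            ← ENNReal.rpow_natCast (((volume.restrict I) Set.univ) ^ (1/2:ℝ)) 2,
            ← ENNReal.rpow_mul, ← ENNReal.rpow_mul, hvol]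
          norm_num
  calc lT n f x ^ 2 = c ^ 2 * (∫⁻ t in I, f t) ^ 2 := by rw [lT]; ring
    _ ≤ c ^ 2 * ((∫⁻ t in I, f t ^ 2) * ENNReal.ofReal ((2:ℝ)^n * 2)) :=
        mul_le_mul_right hJ _
    _ = (c * ENNReal.ofReal ((2:ℝ)^n * 2)) * (c * ∫⁻ t in I, f t ^ 2) := by ring
    _ = lT n (fun t => f t ^ 2) x := by rw [hc_def, coeff_mul_len, one_mul, lT]

lemma lintegral_lT_sq_le {f : ℝ → ℝ≥0∞} (hf : Measurable f) (n : ℤ) :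
    ∫⁻ x, lT n f x ^ 2 ≤ ∫⁻ x, f x ^ 2 := by
  calc ∫⁻ x, lT n f x ^ 2 ≤ ∫⁻ x, lT n (fun t => f t ^ 2) x :=
        lintegral_mono fun x => sq_lT_le_lT_sq hf n x
    _ = ∫⁻ x, lT n (fun t => f t ^ 2) x * (fun _ => (1:ℝ≥0∞)) x := by simp
    _ = ∫⁻ x, f x ^ 2 * lT n (fun _ => (1:ℝ≥0∞)) x :=
        lT_selfadj (hf.pow_const 2) measurable_const n
    _ = ∫⁻ x, f x ^ 2 := by simp_rw [lT_const]; simp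

noncomputable def Phi {N : ℕ} (G : Fin N → ℝ → ℝ≥0∞) (k : ℕ) (α : Equiv.Perm (Fin N)) : ℝ≥0∞ :=
  ∫⁻ x, (∑ n : Fin N, lT (((n:ℕ):ℤ) + (k:ℤ)) (G (α n)) x) ^ 2

lemma ite_split (P : Prop) [Decidable P] (a : ℝ≥0∞) :
    a = (if P then a else 0) + (if ¬ P then a else 0) := by
  by_cases h : P <;> simp [h]

lemma Phi_le {N : ℕ} (G : Fin N → ℝ → ℝ≥0∞) (hG : ∀ j, Measurable (G j)) (k : ℕ)
    (α : Equiv.Perm (Fin N)) :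
    Phi G k α ≤ 4 * (∫⁻ x, (∑ j, G j x) ^ 2) ^ (1/2:ℝ) * (Phi G (k+1) α) ^ (1/2:ℝ) := by
  classical
  set u : Fin N → ℝ → ℝ≥0∞ := fun n => lT (((n:ℕ):ℤ) + (k:ℤ)) (G (α n)) with hu_def
  set v : Fin N → ℝ → ℝ≥0∞ := fun m => lT (((m:ℕ):ℤ) + ((k:ℤ)+1)) (G (α m)) with hv_def
  have hu : ∀ n, Measurable (u n) := fun n => measurable_lT (hG (α n)) _
  have hv : ∀ m, Measurable (v m) := fun m => measurable_lT (hG (α m)) _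
  set 𝔾 : ℝ → ℝ≥0∞ := fun x => ∑ j, G j x with hG_def
  have h𝔾 : Measurable 𝔾 := Finset.measurable_sum _ fun j _ => hG j
  set I : Fin N → Fin N → ℝ≥0∞ := fun n m => ∫⁻ x, u n x * u m x with hI_def
  have hIsymm : ∀ n m, I n m = I m n := by
    intro n m
    simp only [hI_def]
    exact lintegral_congr fun x => mul_comm _ _
  -- Step 1 : expand the square
  have step1 : Phi G k α = ∑ m : Fin N, ∑ n : Fin N, I n m := by
    rw [Phi]
    change ∫⁻ x, (∑ n : Fin N, u n x) ^ 2 = _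
    have hx : ∀ x : ℝ, (∑ n : Fin N, u n x) ^ 2 = ∑ m : Fin N, ∑ n : Fin N, u n x * u m x := by
      intro x
      rw [sq, Finset.sum_mul_sum]
      rw [Finset.sum_comm]
    simp_rw [hx]
    rw [lintegral_finset_sum _ (f := fun m x => ∑ n : Fin N, u n x * u m x) fun m _ => Finset.measurable_sum _ fun n _ => (hu n).mul (hu m)]
    exact Finset.sum_congr rfl fun m _ =>
      lintegral_finset_sum _ fun n _ => (hu n).mul (hu m)
  -- Step 2 : bound by twice the upper-triangular part
  have step2 : ∑ m : Fin N, ∑ n : Fin N, I n m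
      ≤ 2 * ∑ m : Fin N, ∑ n : Fin N, (if n ≤ m then I n m else 0) := by
    have hsplit : ∑ m : Fin N, ∑ n : Fin N, I n m
        = (∑ m : Fin N, ∑ n : Fin N, (if n ≤ m then I n m else 0))
          + ∑ m : Fin N, ∑ n : Fin N, (if ¬ n ≤ m then I n m else 0) := by
      rw [← Finset.sum_add_distrib]
      refine Finset.sum_congr rfl fun m _ => ?_
      rw [← Finset.sum_add_distrib]
      exact Finset.sum_congr rfl fun n _ => ite_split _ _
    rw [hsplit, two_mul]
    refine add_le_add_right ?_ _
    have hmr : ∀ a b : Fin N, (if ¬ b ≤ a then I b a else 0) = (if a < b then I a b else 0) := by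
      intro a b
      by_cases h : b ≤ a
      · rw [if_neg (by simpa using h), if_neg (not_lt.mpr h)]
      · rw [if_pos h, if_pos (not_le.mp h), hIsymm]
    calc ∑ m : Fin N, ∑ n : Fin N, (if ¬ n ≤ m then I n m else 0)
        = ∑ m : Fin N, ∑ n : Fin N, (if m < n then I m n else 0) :=
          Finset.sum_congr rfl fun m _ => Finset.sum_congr rfl fun n _ => hmr m n
      _ = ∑ n : Fin N, ∑ m : Fin N, (if m < n then I m n else 0) := Finset.sum_comm
      _ ≤ ∑ n : Fin N, ∑ m : Fin N, (if m ≤ n then I m n else 0) := by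
          refine Finset.sum_le_sum fun a _ => Finset.sum_le_sum fun b _ => ?_
          split_ifs with h1 h2
          · exact le_refl _
          · exact absurd h1.le h2
          · exact zero_le
          · exact le_refl _
  -- Step 4 : upper-triangular terms
  have step4 : ∀ n m : Fin N, n ≤ m → I n m ≤ 2 * ∫⁻ x, G (α n) x * v m x := by
    intro n m hnm
    have hsa : I n m = ∫⁻ x, G (α n) x * lT (((n:ℕ):ℤ) + (k:ℤ)) (u m) x :=
      lT_selfadj (hG (α n)) (hu m) _
    rw [hsa]
    have hcomp : ∀ x, lT (((n:ℕ):ℤ) + (k:ℤ)) (u m) x ≤ 2 * v m x := by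
      intro x
      have h1 : (((n:ℕ):ℤ) + (k:ℤ)) ≤ (((m:ℕ):ℤ) + (k:ℤ)) := by
        have : ((n:ℕ):ℤ) ≤ ((m:ℕ):ℤ) := by exact_mod_cast (Fin.le_def.mp hnm)
        omega
      have h2 := lT_comp h1 (G (α m)) x
      have h3 : (((m:ℕ):ℤ) + (k:ℤ)) + 1 = ((m:ℕ):ℤ) + ((k:ℤ)+1) := by ring
      rw [h3] at h2
      exact h2
    calc ∫⁻ x, G (α n) x * lT (((n:ℕ):ℤ) + (k:ℤ)) (u m) x
        ≤ ∫⁻ x, G (α n) x * (2 * v m x) :=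
          lintegral_mono fun x => mul_le_mul_right (hcomp x) _
      _ = 2 * ∫⁻ x, G (α n) x * v m x := by
          rw [← lintegral_const_mul 2 (f := fun x => G (α n) x * v m x) ((hG (α n)).mul (hv m))]
          exact lintegral_congr fun x => by ring
  -- Step 5/6 : sum the upper-triangular bounds
  have hW : ∀ (m : Fin N) (x : ℝ), (∑ n : Fin N, if n ≤ m then G (α n) x else 0) ≤ 𝔾 x := by
    intro m x
    rw [← Finset.sum_filter]
    have himg : ∑ n ∈ Finset.filter (fun n => n ≤ m) Finset.univ, G (α n) x
        = ∑ j ∈ (Finset.filter (fun n => n ≤ m) Finset.univ).image α, G j x := by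
      rw [Finset.sum_image (fun a _ b _ hab => α.injective hab)]
    rw [himg]
    exact Finset.sum_le_sum_of_subset (Finset.subset_univ _)
  have step5 : ∑ m : Fin N, ∑ n : Fin N, (if n ≤ m then I n m else 0)
      ≤ 2 * ∑ m : Fin N, ∫⁻ x, 𝔾 x * v m x := by
    calc ∑ m : Fin N, ∑ n : Fin N, (if n ≤ m then I n m else 0)
        ≤ ∑ m : Fin N, ∑ n : Fin N, (if n ≤ m then 2 * ∫⁻ x, G (α n) x * v m x else 0) := by
          refine Finset.sum_le_sum fun m _ => Finset.sum_le_sum fun n _ => ?_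
          split_ifs with h
          · exact step4 n m h
          · exact le_refl 0
      _ = 2 * ∑ m : Fin N, ∫⁻ x, (∑ n : Fin N, if n ≤ m then G (α n) x else 0) * v m x := by
          rw [Finset.mul_sum]
          refine Finset.sum_congr rfl fun m _ => ?_
          have hmeas : ∀ n : Fin N, Measurable fun x => (if n ≤ m then G (α n) x else 0) * v m x := by
            intro n
            by_cases h : n ≤ m
            · simp only [if_pos h]; exact (hG _).mul (hv m)
            · simp only [if_neg h, zero_mul]; exact measurable_const
          have hsum : (∫⁻ x, (∑ n : Fin N, if n ≤ m then G (α n) x else 0) * v m x)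
              = ∑ n : Fin N, ∫⁻ x, (if n ≤ m then G (α n) x else 0) * v m x := by
            rw [← lintegral_finset_sum _ fun n _ => hmeas n]
            exact lintegral_congr fun x => by rw [Finset.sum_mul]
          rw [hsum, Finset.mul_sum]
          refine Finset.sum_congr rfl fun n _ => ?_
          by_cases h : n ≤ m
          · simp only [if_pos h]
          · simp only [if_neg h, zero_mul, lintegral_zero, mul_zero]
      _ ≤ 2 * ∑ m : Fin N, ∫⁻ x, 𝔾 x * v m x :=
          mul_le_mul_right (Finset.sum_le_sum fun m _ =>
            lintegral_mono fun x => mul_le_mul_left (hW m x) _) 2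
  -- Step 7 : Cauchy-Schwarz
  have hsv : Measurable fun x => ∑ m : Fin N, v m x :=
    Finset.measurable_sum _ fun m _ => hv m
  have hsum_v : ∑ m : Fin N, ∫⁻ x, 𝔾 x * v m x = ∫⁻ x, 𝔾 x * ∑ m : Fin N, v m x := by
    rw [← lintegral_finset_sum _ (f := fun m x => 𝔾 x * v m x) fun m _ => h𝔾.mul (hv m)]
    exact lintegral_congr fun x => (Finset.mul_sum _ _ _).symm
  have hconj : Real.HolderConjugate 2 2 := Real.HolderConjugate.two_two
  have hholder := ENNReal.lintegral_mul_le_Lp_mul_Lq volume hconj h𝔾.aemeasurable hsv.aemeasurable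
  simp only [Pi.mul_apply, ENNReal.rpow_two] at hholder
  have hPhi1 : Phi G (k+1) α = ∫⁻ x, (∑ m : Fin N, v m x) ^ 2 := by
    rw [Phi]
    simp only [hv_def, Nat.cast_add, Nat.cast_one]
  calc Phi G k α = ∑ m : Fin N, ∑ n : Fin N, I n m := step1
    _ ≤ 2 * ∑ m : Fin N, ∑ n : Fin N, (if n ≤ m then I n m else 0) := step2
    _ ≤ 2 * (2 * ∑ m : Fin N, ∫⁻ x, 𝔾 x * v m x) := mul_le_mul_right step5 2
    _ = 4 * ∫⁻ x, 𝔾 x * ∑ m : Fin N, v m x := by rw [hsum_v, ← mul_assoc]; norm_num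
    _ ≤ 4 * ((∫⁻ x, 𝔾 x ^ 2) ^ (1/2:ℝ) * (∫⁻ x, (∑ m : Fin N, v m x) ^ 2) ^ (1/2:ℝ)) :=
        mul_le_mul_right hholder 4
    _ = 4 * (∫⁻ x, (∑ j, G j x) ^ 2) ^ (1/2:ℝ) * (Phi G (k+1) α) ^ (1/2:ℝ) := by
        rw [hPhi1, hG_def, ← mul_assoc]

lemma Lp_sum_le {ι : Type*} (s : Finset ι) (f : ι → ℝ → ℝ≥0∞) (hf : ∀ i, Measurable (f i)) :
    (∫⁻ x, (∑ i ∈ s, f i x) ^ (2:ℝ)) ^ (1/2:ℝ) ≤ ∑ i ∈ s, (∫⁻ x, f i x ^ (2:ℝ)) ^ (1/2:ℝ) := by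
  classical
  induction s using Finset.induction_on with
  | empty => simp [ENNReal.zero_rpow_of_pos]
  | insert a s ha ih =>
    simp only [Finset.sum_insert ha]
    have key := ENNReal.lintegral_Lp_add_le (μ := volume) (p := 2) (hf a).aemeasurable
      (Finset.measurable_sum s fun i _ => hf i).aemeasurable one_le_two
    exact key.trans (add_le_add_right ih _)

lemma Psi_bound {N : ℕ} (G : Fin N → ℝ → ℝ≥0∞) (hG : ∀ j, Measurable (G j)) (k : ℕ)
    (α : Equiv.Perm (Fin N)) :
    (Phi G k α) ^ (1/2:ℝ) ≤ ∑ j, (∫⁻ x, G j x ^ 2) ^ (1/2:ℝ) := by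
  have h1 : (Phi G k α) ^ (1/2:ℝ)
      ≤ ∑ n : Fin N, (∫⁻ x, (lT (((n:ℕ):ℤ) + (k:ℤ)) (G (α n)) x) ^ 2) ^ (1/2:ℝ) := by
    have := Lp_sum_le (Finset.univ : Finset (Fin N))
      (fun n => lT (((n:ℕ):ℤ) + (k:ℤ)) (G (α n))) (fun n => measurable_lT (hG (α n)) _)
    simp only [ENNReal.rpow_two] at this
    exact this
  refine h1.trans ?_
  have h2 : ∀ n : Fin N, (∫⁻ x, (lT (((n:ℕ):ℤ) + (k:ℤ)) (G (α n)) x) ^ 2) ^ (1/2:ℝ)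
      ≤ (∫⁻ x, G (α n) x ^ 2) ^ (1/2:ℝ) := fun n =>
    ENNReal.rpow_le_rpow (lintegral_lT_sq_le (hG (α n)) _) (by norm_num)
  refine (Finset.sum_le_sum fun n _ => h2 n).trans ?_
  rw [Equiv.sum_comp α (fun j => (∫⁻ x, G j x ^ 2) ^ (1/2:ℝ))]

lemma sup_bound {N : ℕ} (G : Fin N → ℝ → ℝ≥0∞) (hG : ∀ j, Measurable (G j))
    (hfin : ∀ j, (∫⁻ x, G j x ^ 2) ≠ ⊤) (k : ℕ) (α : Equiv.Perm (Fin N)) :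
    (Phi G k α) ^ (1/2:ℝ) ≤ 4 * (∫⁻ x, (∑ j, G j x) ^ 2) ^ (1/2:ℝ) := by
  set L := (∫⁻ x, (∑ j, G j x) ^ 2) ^ (1/2:ℝ) with hL
  set B := ∑ j, (∫⁻ x, G j x ^ 2) ^ (1/2:ℝ) with hB_def
  have hB : B ≠ ⊤ := by
    rw [hB_def]
    exact (ENNReal.sum_lt_top.mpr fun j _ =>
      (ENNReal.rpow_ne_top_of_nonneg (by norm_num) (hfin j)).lt_top).ne
  set S := ⨆ p : ℕ × Equiv.Perm (Fin N), (Phi G p.1 p.2) ^ (1/2:ℝ) with hS_def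
  have hSB : S ≤ B := iSup_le fun p => Psi_bound G hG p.1 p.2
  have hStop : S ≠ ⊤ := (lt_of_le_of_lt hSB hB.lt_top).ne
  have hle : ∀ p : ℕ × Equiv.Perm (Fin N), (Phi G p.1 p.2) ^ (1/2:ℝ) ≤ S :=
    fun p => le_iSup (fun p : ℕ × Equiv.Perm (Fin N) => (Phi G p.1 p.2) ^ (1/2:ℝ)) p
  have hkey : ∀ p : ℕ × Equiv.Perm (Fin N), (Phi G p.1 p.2) ^ (1/2:ℝ) ≤ (4 * L * S) ^ (1/2:ℝ) := by
    intro p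
    refine ENNReal.rpow_le_rpow ?_ (by norm_num)
    calc Phi G p.1 p.2 ≤ 4 * L * (Phi G (p.1+1) p.2) ^ (1/2:ℝ) := Phi_le G hG p.1 p.2
      _ ≤ 4 * L * S := mul_le_mul_right (hle (p.1+1, p.2)) _
  have hS2 : S ≤ (4 * L * S) ^ (1/2:ℝ) := iSup_le hkey
  have hhalf : ∀ y : ℝ≥0∞, y ^ (1/2:ℝ) * y ^ (1/2:ℝ) = y := by
    intro y
    rw [← ENNReal.rpow_add_of_nonneg _ _ (by norm_num) (by norm_num)]
    norm_num
  have hSS : S * S ≤ 4 * L * S :=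
    (mul_le_mul' hS2 hS2).trans (le_of_eq (hhalf _))
  rcases eq_or_ne S 0 with h0 | h0
  · exact ((hle (k, α)).trans_eq h0).trans zero_le
  · have hS4L : S ≤ 4 * L := (ENNReal.mul_le_mul_iff_left h0 hStop).mp hSS
    exact (hle (k, α)).trans hS4L

lemma T_congr {f f' : ℝ → ℝ} (h : f =ᵐ[volume] f') (n : ℤ) (x : ℝ) :
    T n f x = T n f' x := by
  rw [T, T]
  congr 1
  exact intervalIntegral.integral_congr_ae (h.mono fun t ht _ => ht)

lemma T_bridge {f' : ℝ → ℝ} (hmem : MemLp f' 2 volume) (hnn : 0 ≤ᵐ[volume] f')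
    (n : ℤ) (x : ℝ) :
    0 ≤ T n f' x ∧
      ENNReal.ofReal (T n f' x) = lT n (fun t => ENNReal.ofReal (f' t)) x := by
  set a := x - (2:ℝ)^n with ha
  set b := x + (2:ℝ)^n with hb
  have hab : a ≤ b := by
    rw [ha, hb]
    have : (0:ℝ) < (2:ℝ)^n := by positivity
    linarith
  haveI hfm : IsFiniteMeasure (volume.restrict (Set.Ioo a b)) := by
    constructor
    rw [Measure.restrict_apply_univ, Real.volume_Ioo]
    exact ENNReal.ofReal_lt_top
  have hint : IntegrableOn f' (Set.Ioo a b) volume :=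
    (hmem.restrict (Set.Ioo a b)).integrable one_le_two
  have hnnr : 0 ≤ᵐ[volume.restrict (Set.Ioo a b)] f' := ae_restrict_of_ae hnn
  have hTeq : T n f' x = (2:ℝ)^(-(n+1)) * ∫ t in Set.Ioo a b, f' t := by
    rw [T, intervalIntegral.integral_of_le hab, integral_Ioc_eq_integral_Ioo]
  constructor
  · rw [hTeq]
    exact mul_nonneg (by positivity) (integral_nonneg_of_ae hnnr)
  · rw [hTeq, ENNReal.ofReal_mul (by positivity), lT,
      ofReal_integral_eq_lintegral_ofReal hint hnnr]

lemma eLpNorm_two_eq {f : ℝ → ℝ} (hnn : 0 ≤ᵐ[volume] f) :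
    eLpNorm f 2 volume = (∫⁻ x, (ENNReal.ofReal (f x)) ^ 2) ^ (1/2:ℝ) := by
  rw [eLpNorm_eq_lintegral_rpow_enorm_toReal (by norm_num) (by norm_num)]
  have h2 : (2:ℝ≥0∞).toReal = (2:ℝ) := by simp
  rw [h2]
  congr 1
  apply lintegral_congr_ae
  filter_upwards [hnn] with x hx
  rw [ENNReal.rpow_two, Real.enorm_eq_ofReal hx]

/-- Stein-type `L²` estimate for the dyadic averaging operators: for nonnegative
`g₁,…,g_N ∈ L²(ℝ)` and any bijection `α`,
`‖∑ Tₙ g_{α(n)}‖₂² ≤ 4 ‖∑ gₙ‖₂ ⊔_β ‖∑ Tₘ g_{β(m)}‖₂`, and consequently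
`⊔_α ‖∑ Tₙ g_{α(n)}‖₂ ≤ 4 ‖∑ gₙ‖₂`. -/
theorem stmt11 {N : ℕ} (g : Fin N → ℝ → ℝ)
    (hg : ∀ k, MemLp (g k) 2 volume) (hg0 : ∀ k, ∀ᵐ x ∂(volume : Measure ℝ), 0 ≤ g k x) :
    (∀ α : Equiv.Perm (Fin N),
      eLpNorm (fun x => ∑ n : Fin N, T ((n : ℕ) : ℤ) (g (α n)) x) 2 volume ^ 2 ≤
        4 * eLpNorm (fun x => ∑ n, g n x) 2 volume *
          ⨆ β : Equiv.Perm (Fin N),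
            eLpNorm (fun x => ∑ m : Fin N, T ((m : ℕ) : ℤ) (g (β m)) x) 2 volume) ∧
    (⨆ α : Equiv.Perm (Fin N),
        eLpNorm (fun x => ∑ n : Fin N, T ((n : ℕ) : ℤ) (g (α n)) x) 2 volume ≤
      4 * eLpNorm (fun x => ∑ n, g n x) 2 volume) := by
  classical
  set g' : Fin N → ℝ → ℝ := fun k => ((hg k).1.aemeasurable).mk (g k) with hg'_def
  have hmeas : ∀ k, Measurable (g' k) := fun k => ((hg k).1.aemeasurable).measurable_mk
  have haeeq : ∀ k, g k =ᵐ[volume] g' k := fun k => ((hg k).1.aemeasurable).ae_eq_mk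
  have hmem' : ∀ k, MemLp (g' k) 2 volume := fun k => (hg k).ae_eq (haeeq k)
  have hnn' : ∀ k, 0 ≤ᵐ[volume] g' k := fun k =>
    ((hg0 k).and (haeeq k)).mono fun x h => h.2 ▸ h.1
  set G : Fin N → ℝ → ℝ≥0∞ := fun k t => ENNReal.ofReal (g' k t) with hG_def
  have hGmeas : ∀ k, Measurable (G k) := fun k => ENNReal.measurable_ofReal.comp (hmeas k)
  have hfin : ∀ k, (∫⁻ x, G k x ^ 2) ≠ ⊤ := by
    intro k
    have h1 := (hmem' k).2
    rw [eLpNorm_two_eq (hnn' k)] at h1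
    intro h
    rw [hG_def] at h
    rw [h, ENNReal.top_rpow_of_pos (by norm_num)] at h1
    exact (lt_irrefl _ h1).elim
  have hid : ∀ α : Equiv.Perm (Fin N),
      eLpNorm (fun x => ∑ n : Fin N, T ((n : ℕ) : ℤ) (g (α n)) x) 2 volume
        = (Phi G 0 α) ^ (1/2:ℝ) := by
    intro α
    have hfun : (fun x => ∑ n : Fin N, T ((n : ℕ) : ℤ) (g (α n)) x)
        = fun x => ∑ n : Fin N, T ((n : ℕ) : ℤ) (g' (α n)) x := by
      funext x
      exact Finset.sum_congr rfl fun n _ => T_congr (haeeq (α n)) _ x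
    rw [hfun, eLpNorm_two_eq (Filter.Eventually.of_forall fun x =>
      Finset.sum_nonneg fun n _ => (T_bridge (hmem' (α n)) (hnn' (α n)) _ x).1)]
    have hPhi0 : Phi G 0 α = ∫⁻ x, (∑ n : Fin N, lT ((n : ℕ) : ℤ) (G (α n)) x) ^ 2 := by
      rw [Phi]
      simp
    rw [hPhi0]
    congr 1
    refine lintegral_congr fun x => ?_
    congr 1
    rw [ENNReal.ofReal_sum_of_nonneg fun n _ => (T_bridge (hmem' (α n)) (hnn' (α n)) _ x).1]
    exact Finset.sum_congr rfl fun n _ => (T_bridge (hmem' (α n)) (hnn' (α n)) _ x).2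
  have hnsum : 0 ≤ᵐ[volume] fun x => ∑ n, g n x :=
    (ae_all_iff.mpr hg0).mono fun x h => Finset.sum_nonneg fun n _ => h n
  have hRHS : eLpNorm (fun x => ∑ n, g n x) 2 volume
      = (∫⁻ x, (∑ j, G j x) ^ 2) ^ (1/2:ℝ) := by
    rw [eLpNorm_two_eq hnsum]
    congr 1
    apply lintegral_congr_ae
    filter_upwards [ae_all_iff.mpr haeeq, ae_all_iff.mpr hg0] with x h1 h2
    congr 1
    rw [ENNReal.ofReal_sum_of_nonneg fun n _ => h2 n]
    exact Finset.sum_congr rfl fun n _ => by rw [h1 n]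
  have hmain : ∀ α : Equiv.Perm (Fin N),
      (Phi G 0 α) ^ (1/2:ℝ) ≤ 4 * eLpNorm (fun x => ∑ n, g n x) 2 volume := by
    intro α
    rw [hRHS]
    exact sup_bound G hGmeas hfin 0 α
  constructor
  · intro α
    rw [hid α]
    have h2 : (Phi G 0 α) ^ (1/2:ℝ)
        ≤ ⨆ β : Equiv.Perm (Fin N),
            eLpNorm (fun x => ∑ m : Fin N, T ((m : ℕ) : ℤ) (g (β m)) x) 2 volume := by
      rw [← hid α]
      exact le_iSup (fun β : Equiv.Perm (Fin N) =>
        eLpNorm (fun x => ∑ m : Fin N, T ((m : ℕ) : ℤ) (g (β m)) x) 2 volume) α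
    calc ((Phi G 0 α) ^ (1/2:ℝ)) ^ 2
        = (Phi G 0 α) ^ (1/2:ℝ) * (Phi G 0 α) ^ (1/2:ℝ) := sq _
      _ ≤ _ := mul_le_mul' (hmain α) h2
  · exact iSup_le fun α => by rw [hid α]; exact hmain α
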